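/- arXiv:2602.01944 — 3 statements merged into one kernel-verified Lean document; each statement's English description precedes it below -/
import Mathlib

section
/- Let E be a finite nonempty set, Q a Markov generator on E, and β > 0. If f : E → ℝ satisfies Q[f](x) - β f(x) ≤ 0 for every x ∈ E, then f(x) ≥ 0 for every x ∈ E. -/
theorem stmt3 {E : Type*} [Fintype E] [Nonempty E]
    (Q : E → E → ℝ)
    (hrow : ∀ x, ∑ y, Q x y = 0)
    (hoff : ∀ x y, x ≠ y → 0 ≤ Q x y)
    (β : ℝ) (hβ : 0 < β)
    (f : E → ℝ)
    (hf : ∀ x, ∑ y, Q x y * f y - β * f x ≤ 0) :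
    ∀ x, 0 ≤ f x := by
  obtain ⟨x₀, -, hmin⟩ := Finset.exists_min_image Finset.univ f ⟨Classical.arbitrary E, Finset.mem_univ _⟩
  have hmin' : ∀ y, f x₀ ≤ f y := fun y => hmin y (Finset.mem_univ y)
  have hzero : ∑ y, Q x₀ y * f x₀ = 0 := by
    rw [← Finset.sum_mul, hrow, zero_mul]
  have key : 0 ≤ ∑ y, Q x₀ y * f y := by
    rw [← hzero]
    apply Finset.sum_le_sum
    intro y _
    by_cases h : y = x₀
    · subst h; rfl
    · exact mul_le_mul_of_nonneg_left (hmin' y) (hoff x₀ y (Ne.symm h))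
  have h0 : 0 ≤ f x₀ := by
    have := hf x₀
    nlinarith
  intro x
  exact le_trans h0 (hmin' x)
end

section
/- Let E be a finite nonempty set, Q a Markov generator on E, and β > 0. If f, g : E → ℝ satisfy Q[f](x) - β f(x) ≤ Q[g](x) - β g(x) for every x ∈ E, then f(x) ≥ g(x) for every x ∈ E. -/
theorem stmt4 {E : Type*} [Fintype E] [Nonempty E]
    (Q : E → E → ℝ)
    (hrow : ∀ x, ∑ y, Q x y = 0)
    (hoff : ∀ x y, x ≠ y → 0 ≤ Q x y)
    (β : ℝ) (hβ : 0 < β)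
    (f g : E → ℝ)
    (hfg : ∀ x, ∑ y, Q x y * f y - β * f x ≤ ∑ y, Q x y * g y - β * g x) :
    ∀ x, g x ≤ f x := by
  set h : E → ℝ := fun x => g x - f x with hh
  obtain ⟨x0, -, hx0⟩ := Finset.exists_max_image Finset.univ h
    ⟨Classical.arbitrary E, Finset.mem_univ _⟩
  have key : β * h x0 ≤ ∑ y, Q x0 y * h y := by
    have h1 := hfg x0
    have h2 : ∑ y, Q x0 y * h y = (∑ y, Q x0 y * g y) - ∑ y, Q x0 y * f y := by
      rw [← Finset.sum_sub_distrib]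
      exact Finset.sum_congr rfl fun y _ => by simp [hh]; ring
    simp only [hh]
    rw [h2]
    linarith
  have hQ : ∑ y, Q x0 y * h y ≤ 0 := by
    have heq : ∑ y, Q x0 y * (h y - h x0)
        = ∑ y, Q x0 y * h y - (∑ y, Q x0 y) * h x0 := by
      rw [Finset.sum_mul, ← Finset.sum_sub_distrib]
      exact Finset.sum_congr rfl fun y _ => by ring
    rw [hrow, zero_mul, sub_zero] at heq
    rw [← heq]
    apply Finset.sum_nonpos
    intro y _
    rcases eq_or_ne x0 y with rfl | hne
    · simp
    · exact mul_nonpos_of_nonneg_of_nonpos (hoff _ _ hne)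
        (sub_nonpos.2 (hx0 y (Finset.mem_univ y)))
  have hx0le : h x0 ≤ 0 := by nlinarith
  intro x
  have := hx0 x (Finset.mem_univ x)
  simp only [hh] at this hx0le
  linarith
end

section
/- Let E be a finite set, Q a Markov generator on E, β > 0, functions ψ ≤ φ on E, and pairwise disjoint sets A, B ⊆ E with (A ∪ B) ∩ {x : ψ(x) = φ(x)} = ∅. Suppose Ṽ : E → ℝ satisfies: Ṽ = ψ on A with Q[Ṽ] - βṼ ≤ 0 on A; Ṽ = φ on B with Q[Ṽ] - βṼ ≥ 0 on B; Q[Ṽ] - βṼ = 0 outside A ∪ B ∪ {ψ = φ}; and ψ ≤ Ṽ ≤ φ on E. Then Ṽ is uniquely determined by these conditions (any two functions satisfying them with the same sets A, B coincide). -/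
lemma aux18 {E : Type*} [Fintype E]
    (Q : E → E → ℝ)
    (hrow : ∀ x, ∑ y, Q x y = 0)
    (hoff : ∀ x y, x ≠ y → 0 ≤ Q x y)
    (β : ℝ) (hβ : 0 < β)
    (ψ φ : E → ℝ)
    (A B : Set E)
    (V₁ V₂ : E → ℝ)
    (hV₁A : ∀ x ∈ A, V₁ x = ψ x)
    (hV₁B : ∀ x ∈ B, V₁ x = φ x)
    (hV₁h : ∀ x, x ∉ A ∪ B ∪ {x | ψ x = φ x} → ∑ y, Q x y * V₁ y - β * V₁ x = 0)
    (hV₁bd : ∀ x, ψ x ≤ V₁ x ∧ V₁ x ≤ φ x)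
    (hV₂A : ∀ x ∈ A, V₂ x = ψ x)
    (hV₂B : ∀ x ∈ B, V₂ x = φ x)
    (hV₂h : ∀ x, x ∉ A ∪ B ∪ {x | ψ x = φ x} → ∑ y, Q x y * V₂ y - β * V₂ x = 0)
    (hV₂bd : ∀ x, ψ x ≤ V₂ x ∧ V₂ x ≤ φ x) :
    ∀ x, V₁ x ≤ V₂ x := by
  set W : E → ℝ := fun x => V₁ x - V₂ x with hW
  by_contra h
  push_neg at h
  obtain ⟨z, hz⟩ := h
  obtain ⟨x₀, -, hx₀⟩ := Finset.exists_max_image Finset.univ W ⟨z, Finset.mem_univ z⟩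
  have hpos : 0 < W x₀ := lt_of_lt_of_le (by simp [hW]; linarith) (hx₀ z (Finset.mem_univ z))
  -- x₀ not in A, B, or {ψ = φ}
  have hnA : x₀ ∉ A := fun hmem => by
    have := hV₁A x₀ hmem; have := hV₂A x₀ hmem
    simp [hW] at hpos; linarith
  have hnB : x₀ ∉ B := fun hmem => by
    have := hV₁B x₀ hmem; have := hV₂B x₀ hmem
    simp [hW] at hpos; linarith
  have hnE : x₀ ∉ {x | ψ x = φ x} := fun hmem => by
    have h1 := hV₁bd x₀; have h2 := hV₂bd x₀
    simp only [Set.mem_setOf_eq] at hmem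
    simp [hW] at hpos; linarith
  have hx₀n : x₀ ∉ A ∪ B ∪ {x | ψ x = φ x} := by
    simp [hnA, hnB, hnE]
  have e1 := hV₁h x₀ hx₀n
  have e2 := hV₂h x₀ hx₀n
  have key : ∑ y, Q x₀ y * W y = β * W x₀ := by
    have : ∑ y, Q x₀ y * W y = (∑ y, Q x₀ y * V₁ y) - (∑ y, Q x₀ y * V₂ y) := by
      rw [← Finset.sum_sub_distrib]; congr 1; ext y; ring
    rw [this]; simp [hW]; linarith
  have nonpos : ∑ y, Q x₀ y * W y ≤ 0 := by
    have : ∑ y, Q x₀ y * W y = ∑ y, Q x₀ y * (W y - W x₀) := by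
      rw [show (∑ y, Q x₀ y * (W y - W x₀)) = (∑ y, Q x₀ y * W y) - (∑ y, Q x₀ y) * W x₀ by
        rw [Finset.sum_mul, ← Finset.sum_sub_distrib]; congr 1; ext y; ring]
      rw [hrow x₀]; ring
    rw [this]
    apply Finset.sum_nonpos
    intro y _
    rcases eq_or_ne y x₀ with rfl | hne
    · simp
    · have h1 := hoff x₀ y (Ne.symm hne)
      have h2 : W y ≤ W x₀ := hx₀ y (Finset.mem_univ y)
      exact mul_nonpos_of_nonneg_of_nonpos h1 (by linarith)
  nlinarith [key, nonpos, hpos]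

theorem stmt18 {E : Type*} [Fintype E]
    (Q : E → E → ℝ)
    (hrow : ∀ x, ∑ y, Q x y = 0)
    (hoff : ∀ x y, x ≠ y → 0 ≤ Q x y)
    (β : ℝ) (hβ : 0 < β)
    (ψ φ : E → ℝ) (hψφ : ∀ x, ψ x ≤ φ x)
    (A B : Set E) (hAB : Disjoint A B)
    (hA : A ∩ {x | ψ x = φ x} = ∅) (hB : B ∩ {x | ψ x = φ x} = ∅)
    (V₁ V₂ : E → ℝ)
    (hV₁A : ∀ x ∈ A, V₁ x = ψ x ∧ ∑ y, Q x y * V₁ y - β * V₁ x ≤ 0)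
    (hV₁B : ∀ x ∈ B, V₁ x = φ x ∧ 0 ≤ ∑ y, Q x y * V₁ y - β * V₁ x)
    (hV₁h : ∀ x, x ∉ A ∪ B ∪ {x | ψ x = φ x} → ∑ y, Q x y * V₁ y - β * V₁ x = 0)
    (hV₁bd : ∀ x, ψ x ≤ V₁ x ∧ V₁ x ≤ φ x)
    (hV₂A : ∀ x ∈ A, V₂ x = ψ x ∧ ∑ y, Q x y * V₂ y - β * V₂ x ≤ 0)
    (hV₂B : ∀ x ∈ B, V₂ x = φ x ∧ 0 ≤ ∑ y, Q x y * V₂ y - β * V₂ x)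
    (hV₂h : ∀ x, x ∉ A ∪ B ∪ {x | ψ x = φ x} → ∑ y, Q x y * V₂ y - β * V₂ x = 0)
    (hV₂bd : ∀ x, ψ x ≤ V₂ x ∧ V₂ x ≤ φ x) :
    V₁ = V₂ := by
  have h1 := aux18 Q hrow hoff β hβ ψ φ A B V₁ V₂
    (fun x hx => (hV₁A x hx).1) (fun x hx => (hV₁B x hx).1) hV₁h hV₁bd
    (fun x hx => (hV₂A x hx).1) (fun x hx => (hV₂B x hx).1) hV₂h hV₂bd
  have h2 := aux18 Q hrow hoff β hβ ψ φ A B V₂ V₁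
    (fun x hx => (hV₂A x hx).1) (fun x hx => (hV₂B x hx).1) hV₂h hV₂bd
    (fun x hx => (hV₁A x hx).1) (fun x hx => (hV₁B x hx).1) hV₁h hV₁bd
  funext x
  exact le_antisymm (h1 x) (h2 x)
end
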